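/- If < is a strict order on X, then the Dershowitz–Manna ordering on finite multisets over X is a strict order (irreflexive and transitive). -/

import Mathlib

def DMLt {X : Type*} [DecidableEq X] (lt : X → X → Prop) (A B : Multiset X) : Prop :=
  ∃ C D : Multiset X, C ≠ 0 ∧ C ≤ B ∧ A = (B - C) + D ∧
    ∀ d ∈ D, ∃ c ∈ C, lt d c

/-! Regard `lt` as the strict part of the partial order `x = y ∨ lt x y`; then `DMLt lt` is
Mathlib's Dershowitz–Manna ordering `Multiset.IsDershowitzMannaLT`, known to be transitive.
Irreflexivity: `A = (A - C) + D` forces `D = C`, and a maximal element of the nonempty `C`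
cannot lie below any element of `C`. -/

namespace Multiset

variable {α : Type*} [Preorder α]

theorem isDershowitzMannaLT_irrefl (M : Multiset α) : ¬ IsDershowitzMannaLT M M := by
  classical
  rintro ⟨X, Y, Z, hZ, hM, hMZ, hYZ⟩
  obtain rfl : Z = Y := add_left_cancel (hMZ.symm.trans hM)
  obtain ⟨m, hm⟩ := Finset.exists_maximal (s := Z.toFinset) (by simpa using hZ)
  obtain ⟨z, hz, hmz⟩ := hYZ m (mem_toFinset.mp hm.prop)
  exact hm.not_gt (mem_toFinset.mpr hz) hmz

theorem dmLt_iff_isDershowitzMannaLT [DecidableEq α] {M N : Multiset α} :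
    DMLt (· < ·) M N ↔ IsDershowitzMannaLT M N := by
  constructor
  · rintro ⟨C, D, hC, hCN, rfl, hDC⟩
    exact ⟨N - C, D, C, by simpa using hC, rfl, (tsub_add_cancel_of_le hCN).symm, hDC⟩
  · rintro ⟨X, Y, Z, hZ, rfl, rfl, hYZ⟩
    exact ⟨Z, Y, by simpa using hZ, le_add_self, by rw [add_tsub_cancel_right], hYZ⟩

end Multiset

/-- If `lt` is a strict order on `X` (irreflexive and transitive), then the
Dershowitz–Manna ordering on finite multisets over `X` is irreflexive and
transitive. -/
theorem DMLt_strictOrder {X : Type*} [DecidableEq X] (lt : X → X → Prop)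
    (hirr : ∀ x, ¬ lt x x) (htrans : ∀ x y z, lt x y → lt y z → lt x z) :
    (∀ A : Multiset X, ¬ DMLt lt A A) ∧
    (∀ A B C : Multiset X, DMLt lt A B → DMLt lt B C → DMLt lt A C) := by
  let _ : IsStrictOrder X lt := { irrefl := hirr, trans := htrans }
  let _ := partialOrderOfSO lt
  have hDM (A B : Multiset X) : DMLt lt A B ↔ A.IsDershowitzMannaLT B :=
    Multiset.dmLt_iff_isDershowitzMannaLT
  simp only [hDM]
  exact ⟨Multiset.isDershowitzMannaLT_irrefl, fun _ _ _ => Multiset.IsDershowitzMannaLT.trans⟩
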